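/- For S ≥ 3 and D = 0, the expected intercategory distance with one swap is strictly greater than (S+1)/3, i.e., [(1+(S-1)²)·S³ + 4S·Σ_{i=1}^{S-1} i(S-i)] / S⁴ > (S+1)/3. -/
import Mathlib

lemma sum_aux (c : ℚ) : ∀ (n : ℕ), ∑ i ∈ Finset.Icc 1 n, (i : ℚ) * (c - i)
    = c * (n * (n + 1) / 2) - n * (n + 1) * (2 * n + 1) / 6 := by
  intro n
  induction n with
  | zero => simp
  | succ k ih =>
    rw [Finset.sum_Icc_succ_top (by omega)]
    push_cast
    rw [ih]
    ring

/-- For `S ≥ 3` and adjacent categories (`D = 0`), the one-swap intercategory expected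
distance exceeds `(S+1)/3`. -/
theorem intercategory_gt_intra (S : ℕ) (hS : 3 ≤ S) :
    ((1 + ((S : ℚ) - 1) ^ 2) * (S : ℚ) ^ 3 +
        4 * (S : ℚ) * (∑ i ∈ Finset.Icc 1 (S - 1), (i : ℚ) * ((S : ℚ) - i))) / (S : ℚ) ^ 4 >
      ((S : ℚ) + 1) / 3 := by
  have hS1 : ((S - 1 : ℕ) : ℚ) = (S : ℚ) - 1 := by
    have : 1 ≤ S := by omega
    push_cast [this]; ring
  rw [sum_aux, hS1]
  have hSQ : (3 : ℚ) ≤ (S : ℚ) := by exact_mod_cast hS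
  have hpos : (0 : ℚ) < (S : ℚ) ^ 4 := by positivity
  rw [gt_iff_lt, div_lt_div_iff₀ (by norm_num) hpos]
  nlinarith [sq_nonneg ((S:ℚ) - 3), sq_nonneg (S:ℚ), pow_pos (show (0:ℚ) < S by linarith) 2]
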